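/- Combining the two bounds: under the Lanczos bidiagonalization relation AQ_k = P_{k+1}B_k with Q_k spanning K_k(AᵀA, Aᵀb), the rank-k approximation error γ_k = ‖A − P_{k+1}B_kQ_kᵀ‖ satisfies σ_{k+1} ≤ γ_k ≤ σ_{k+1} + σ₁‖sin Θ(V_k, V_k^s)‖. -/

import Mathlib

/-!
Write `A = U Σ Vᵀ`; since `A Q = P B`, the residual `A - P B Qᵀ` equals `A (1 - Q Qᵀ)`.

Lower bound: `P B Qᵀ` vanishes on the orthogonal complement of the `k` columns of `Q`, which
meets the span of the first `k + 1` right singular vectors in a nonzero vector `x`, and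
`‖A x‖ ≥ σ_{k+1} ‖x‖` there.

Upper bound: let `F Fᵀ` be the coordinate projection onto the first `k` coordinates and split
`Σ = Σ (1 - F Fᵀ) + Σ F Fᵀ`. The first part is diagonal with entries at most `σ_{k+1}`; the
second factors through `Fᵀ Vᵀ = V_kᵀ` with `‖Σ F‖ ≤ σ₁`.

Singular values are indexed from `0`, so `σ_{k+1}` is `σ ⟨k, hk⟩`.
-/

open Matrix

/-- Spectral (operator 2-) norm of a real matrix. -/
noncomputable def specNorm {m n : ℕ} (M : Matrix (Fin m) (Fin n) ℝ) : ℝ :=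
  ‖LinearMap.toContinuousLinearMap (Matrix.toEuclideanLin M)‖

open scoped Matrix.Norms.L2Operator
open WithLp (toLp)

theorem specNorm_eq_l2_opNorm {m n : ℕ} (M : Matrix (Fin m) (Fin n) ℝ) : specNorm M = ‖M‖ :=
  rfl

namespace Matrix

theorem exists_ne_zero_mulVec_eq_zero_of_card_lt {K m n : Type*} [Field K] [Fintype m]
    [Fintype n] (M : Matrix m n K) (h : Fintype.card m < Fintype.card n) :
    ∃ v ≠ 0, M *ᵥ v = 0 := by
  obtain ⟨v, hv, hv0⟩ := (Submodule.ne_bot_iff _).mp <|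
    LinearMap.ker_ne_bot_of_finrank_lt (f := M.mulVecLin) (by simpa using h)
  exact ⟨v, hv0, hv⟩

theorem conjTranspose_mul_self_submatrix_one {α m n : Type*} [Semiring α] [StarRing α]
    [Fintype m] [DecidableEq m] [DecidableEq n] {e : n → m} (he : Function.Injective e) :
    ((1 : Matrix m m α).submatrix id e)ᴴ * (1 : Matrix m m α).submatrix id e = 1 := by
  rw [conjTranspose_submatrix, conjTranspose_one,
    ← submatrix_mul _ _ _ _ _ Function.bijective_id, Matrix.one_mul, submatrix_one _ he]

section L2OpNorm

variable {𝕜 : Type*} [RCLike 𝕜] {m n : Type*} [Fintype m] [Fintype n]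

theorem norm_toLp_mulVec_of_conjTranspose_mul_self_eq_one [DecidableEq n] {U : Matrix m n 𝕜}
    (hU : Uᴴ * U = 1) (x : n → 𝕜) : ‖toLp 2 (U *ᵥ x)‖ = ‖toLp 2 x‖ := by
  have hdot : (U *ᵥ x) ⬝ᵥ star (U *ᵥ x) = x ⬝ᵥ star x := by
    rw [dotProduct_comm, star_mulVec, dotProduct_mulVec, vecMul_vecMul, hU, vecMul_one,
      dotProduct_comm]
  have hsq := congrArg RCLike.re hdot
  rw [← EuclideanSpace.inner_eq_star_dotProduct, ← EuclideanSpace.inner_eq_star_dotProduct,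
    ← norm_sq_eq_re_inner, ← norm_sq_eq_re_inner] at hsq
  exact (sq_eq_sq₀ (norm_nonneg _) (norm_nonneg _)).mp hsq

theorem mul_norm_toLp_le_norm_toLp_diagonal_mulVec [DecidableEq n] {c : ℝ} (hc : 0 ≤ c)
    {d : n → 𝕜} (hd : ∀ i, c ≤ ‖d i‖) (x : n → 𝕜) :
    c * ‖toLp 2 x‖ ≤ ‖toLp 2 (diagonal d *ᵥ x)‖ := by
  refine le_of_sq_le_sq ?_ (norm_nonneg _)
  simp only [mul_pow, EuclideanSpace.norm_sq_eq, mulVec_diagonal, Finset.mul_sum, norm_mul]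
  gcongr with i
  exact hd i

theorem l2_opNorm_mul_le_of_le [DecidableEq m] [DecidableEq n] {p : Type*} [Fintype p]
    [DecidableEq p] {A : Matrix m n 𝕜} {B : Matrix n p 𝕜} {a b : ℝ} (ha : ‖A‖ ≤ a)
    (hb : ‖B‖ ≤ b) : ‖A * B‖ ≤ a * b :=
  (l2_opNorm_mul A B).trans (mul_le_mul ha hb (norm_nonneg _) ((norm_nonneg _).trans ha))

theorem l2_opNorm_le_one_of_conjTranspose_mul_self_eq_one [DecidableEq n] {U : Matrix m n 𝕜}
    (hU : Uᴴ * U = 1) : ‖U‖ ≤ 1 := by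
  have hone : ‖(1 : Matrix n n 𝕜)‖ ≤ 1 := by
    rw [← diagonal_one, l2_opNorm_diagonal]
    exact (pi_norm_le_iff_of_nonneg zero_le_one).mpr fun _ => by simp
  have := l2_opNorm_conjTranspose_mul_self U
  rw [hU] at this
  nlinarith [norm_nonneg U]

theorem l2_opNorm_le_one_of_conjTranspose_mul_self_eq_self [DecidableEq m] {M : Matrix m m 𝕜}
    (hM : Mᴴ * M = M) : ‖M‖ ≤ 1 := by
  have := l2_opNorm_conjTranspose_mul_self M
  rw [hM] at this
  nlinarith [norm_nonneg M]

theorem l2_opNorm_one_sub_mul_conjTranspose_le_one [DecidableEq n] {p : Type*} [Fintype p]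
    [DecidableEq p] {Q : Matrix n p 𝕜} (hQ : Qᴴ * Q = 1) : ‖1 - Q * Qᴴ‖ ≤ 1 := by
  have hidem : Q * Qᴴ * (Q * Qᴴ) = Q * Qᴴ := by
    rw [Matrix.mul_assoc, ← Matrix.mul_assoc Qᴴ, hQ, Matrix.one_mul]
  refine l2_opNorm_le_one_of_conjTranspose_mul_self_eq_self ?_
  rw [conjTranspose_sub, conjTranspose_one, conjTranspose_mul, conjTranspose_conjTranspose,
    sub_mul, mul_sub, mul_sub, hidem]
  simp

end L2OpNorm

section FinInclusion

variable (R : Type*)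

def finInclusion [Zero R] [One R] {m n : ℕ} (h : n ≤ m) : Matrix (Fin m) (Fin n) R :=
  (1 : Matrix (Fin m) (Fin m) R).submatrix id (Fin.castLE h)

variable {R}

theorem finInclusion_apply [Zero R] [One R] {m n : ℕ} (h : n ≤ m) (i : Fin m) (j : Fin n) :
    finInclusion R h i j = if (i : ℕ) = j then 1 else 0 := by
  simp [finInclusion, one_apply, Fin.ext_iff]

theorem conjTranspose_finInclusion_mul_self [Semiring R] [StarRing R] {m n : ℕ} (h : n ≤ m) :
    (finInclusion R h)ᴴ * finInclusion R h = 1 :=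
  conjTranspose_mul_self_submatrix_one (Fin.castLE_injective h)

theorem of_eq_finInclusion_mul_diagonal [Semiring R] {m n : ℕ} (h : n ≤ m) (d : Fin n → R) :
    (of fun (i : Fin m) (j : Fin n) => if (i : ℕ) = j then d j else 0) =
      finInclusion R h * diagonal d := by
  ext i j
  simp [mul_diagonal, finInclusion_apply]

theorem diagonal_mul_finInclusion [Semiring R] {m n : ℕ} (h : n ≤ m) (d : Fin m → R) :
    diagonal d * finInclusion R h = finInclusion R h * diagonal (d ∘ Fin.castLE h) := by
  ext i j
  rw [diagonal_mul, mul_diagonal, finInclusion_apply, Function.comp_apply]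
  split_ifs with hij
  · simp [show i = Fin.castLE h j from Fin.ext hij]
  · simp

theorem finInclusion_mul_transpose [Semiring R] {m n : ℕ} (h : n ≤ m) :
    finInclusion R h * (finInclusion R h)ᵀ =
      diagonal fun i : Fin m => if (i : ℕ) < n then 1 else 0 := by
  ext i j
  simp only [mul_apply, diagonal_apply, transpose_apply, finInclusion_apply, mul_ite, mul_one,
    mul_zero]
  by_cases hi : (i : ℕ) < n
  · rw [Finset.sum_eq_single ⟨i, hi⟩]
    · simp [Fin.ext_iff, hi, eq_comm]
    · intro x _ hx
      simp [Fin.ext_iff] at hx ⊢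
      omega
    · simp
  · rw [Finset.sum_eq_zero]
    · simp [hi]
    · intro x _
      simp
      omega

theorem mul_finInclusion [Semiring R] {l m n : ℕ} (h : n ≤ m) (M : Matrix (Fin l) (Fin m) R) :
    M * finInclusion R h = M.submatrix id (Fin.castLE h) :=
  mul_submatrix_one (Equiv.refl _) _ M

end FinInclusion

section SingularValueDecomposition

variable {m n k : ℕ} {U : Matrix (Fin m) (Fin m) ℝ} {V : Matrix (Fin n) (Fin n) ℝ}
  {σ : Fin n → ℝ}

theorem singularValue_le_l2_opNorm_sub_mul_transpose (hk : k < n) (hmn : n ≤ m)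
    (hU : Uᵀ * U = 1) (hV : Vᵀ * V = 1) (hσanti : Antitone σ) (hσk : 0 ≤ σ ⟨k, hk⟩)
    (C : Matrix (Fin m) (Fin k) ℝ) (Q : Matrix (Fin n) (Fin k) ℝ) :
    σ ⟨k, hk⟩ ≤ ‖U * (finInclusion ℝ hmn * diagonal σ) * Vᵀ - C * Qᵀ‖ := by
  set E := finInclusion ℝ hmn
  set J := finInclusion ℝ (show k + 1 ≤ n from hk)
  have hU' : Uᴴ * U = 1 := by rwa [conjTranspose_eq_transpose_of_trivial]
  have hV' : Vᴴ * V = 1 := by rwa [conjTranspose_eq_transpose_of_trivial]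
  obtain ⟨z, hz, hQz⟩ := exists_ne_zero_mulVec_eq_zero_of_card_lt (Qᵀ * V * J) (by simp)
  set x := V *ᵥ J *ᵥ z
  have hCx : (C * Qᵀ) *ᵥ x = 0 := by
    rw [show (C * Qᵀ) *ᵥ x = C *ᵥ ((Qᵀ * V * J) *ᵥ z) by
      simp [x, mulVec_mulVec, Matrix.mul_assoc], hQz, mulVec_zero]
  have hAx : (U * (E * diagonal σ) * Vᵀ) *ᵥ x =
      U *ᵥ E *ᵥ J *ᵥ diagonal (σ ∘ Fin.castLE hk) *ᵥ z := by
    simp only [x, mulVec_mulVec, Matrix.mul_assoc]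
    rw [← Matrix.mul_assoc Vᵀ, hV, Matrix.one_mul, diagonal_mul_finInclusion]
  have hxz : ‖toLp 2 x‖ = ‖toLp 2 z‖ := by
    rw [norm_toLp_mulVec_of_conjTranspose_mul_self_eq_one hV',
      norm_toLp_mulVec_of_conjTranspose_mul_self_eq_one (conjTranspose_finInclusion_mul_self _)]
  have hx : 0 < ‖toLp 2 x‖ := by simpa [hxz] using hz
  have hσx :
      σ ⟨k, hk⟩ * ‖toLp 2 x‖ ≤ ‖toLp 2 ((U * (E * diagonal σ) * Vᵀ - C * Qᵀ) *ᵥ x)‖ := by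
    rw [sub_mulVec, hCx, sub_zero, hAx, hxz,
      norm_toLp_mulVec_of_conjTranspose_mul_self_eq_one hU',
      norm_toLp_mulVec_of_conjTranspose_mul_self_eq_one (conjTranspose_finInclusion_mul_self _),
      norm_toLp_mulVec_of_conjTranspose_mul_self_eq_one (conjTranspose_finInclusion_mul_self _)]
    refine mul_norm_toLp_le_norm_toLp_diagonal_mulVec hσk (fun l => ?_) z
    have hl : Fin.castLE hk l ≤ ⟨k, hk⟩ := Nat.lt_succ_iff.mp l.isLt
    exact (hσanti hl).trans (le_abs_self _)
  exact le_of_mul_le_mul_right (hσx.trans (l2_opNorm_mulVec _ (toLp 2 x))) hx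

theorem l2_opNorm_svd_mul_le (hk : k < n) (hmn : n ≤ m) (hU : Uᵀ * U = 1) (hV : Vᵀ * V = 1)
    (hσ : ∀ i, 0 ≤ σ i) (hσanti : Antitone σ) {p : ℕ} (W : Matrix (Fin n) (Fin p) ℝ) :
    ‖U * (finInclusion ℝ hmn * diagonal σ) * Vᵀ * W‖ ≤
      σ ⟨k, hk⟩ * ‖W‖ +
        σ ⟨0, Nat.zero_lt_of_lt hk⟩ * ‖(V.submatrix id (Fin.castLE hk.le))ᵀ * W‖ := by
  set E := finInclusion ℝ hmn
  set F := finInclusion ℝ hk.le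
  set σhi : Fin n → ℝ := fun j => if (j : ℕ) < k then 0 else σ j
  have hsplit : diagonal σ = diagonal σhi + diagonal σ * F * Fᵀ := by
    rw [Matrix.mul_assoc, finInclusion_mul_transpose, diagonal_mul_diagonal, diagonal_add]
    congr 1
    ext j
    by_cases hj : (j : ℕ) < k <;> simp [σhi, hj]
  have hFV : Fᵀ * Vᵀ = (V.submatrix id (Fin.castLE hk.le))ᵀ := by
    rw [← transpose_mul, mul_finInclusion]
  have hE : ‖E‖ ≤ 1 :=
    l2_opNorm_le_one_of_conjTranspose_mul_self_eq_one (conjTranspose_finInclusion_mul_self _)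
  have hF : ‖F‖ ≤ 1 :=
    l2_opNorm_le_one_of_conjTranspose_mul_self_eq_one (conjTranspose_finInclusion_mul_self _)
  have hUnorm : ‖U‖ ≤ 1 := l2_opNorm_le_one_of_conjTranspose_mul_self_eq_one <| by
    rwa [conjTranspose_eq_transpose_of_trivial]
  have hVnorm : ‖Vᵀ‖ ≤ 1 := by
    rw [← conjTranspose_eq_transpose_of_trivial, l2_opNorm_conjTranspose]
    exact l2_opNorm_le_one_of_conjTranspose_mul_self_eq_one <| by
      rwa [conjTranspose_eq_transpose_of_trivial]
  have hσhi : ‖(diagonal σhi : Matrix (Fin n) (Fin n) ℝ)‖ ≤ σ ⟨k, hk⟩ := by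
    rw [l2_opNorm_diagonal]
    refine (pi_norm_le_iff_of_nonneg (hσ _)).mpr fun j => ?_
    by_cases hj : (j : ℕ) < k
    · simpa [σhi, hj] using hσ _
    · simp only [σhi, hj, if_false, Real.norm_of_nonneg (hσ j)]
      exact hσanti (not_lt.mp hj)
  have hσ0 :
      ‖(diagonal σ : Matrix (Fin n) (Fin n) ℝ)‖ ≤ σ ⟨0, Nat.zero_lt_of_lt hk⟩ := by
    rw [l2_opNorm_diagonal]
    refine (pi_norm_le_iff_of_nonneg (hσ _)).mpr fun j => ?_
    rw [Real.norm_of_nonneg (hσ j)]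
    exact hσanti (Nat.zero_le _)
  have hhi : ‖U * E * diagonal σhi * (Vᵀ * W)‖ ≤ 1 * 1 * σ ⟨k, hk⟩ * (1 * ‖W‖) :=
    l2_opNorm_mul_le_of_le (l2_opNorm_mul_le_of_le (l2_opNorm_mul_le_of_le hUnorm hE) hσhi)
      (l2_opNorm_mul_le_of_le hVnorm le_rfl)
  have hlo : ‖U * E * (diagonal σ * F) * (Fᵀ * Vᵀ * W)‖ ≤
      1 * 1 * (σ ⟨0, Nat.zero_lt_of_lt hk⟩ * 1) * ‖Fᵀ * Vᵀ * W‖ :=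
    l2_opNorm_mul_le_of_le (l2_opNorm_mul_le_of_le (l2_opNorm_mul_le_of_le hUnorm hE)
      (l2_opNorm_mul_le_of_le hσ0 hF)) le_rfl
  have hexpand : U * (E * (diagonal σhi + diagonal σ * F * Fᵀ)) * Vᵀ * W =
      U * E * diagonal σhi * (Vᵀ * W) + U * E * (diagonal σ * F) * (Fᵀ * Vᵀ * W) := by
    simp only [Matrix.mul_add, Matrix.add_mul, Matrix.mul_assoc]
  rw [hsplit, hexpand, ← hFV]
  exact (norm_add_le _ _).trans ((add_le_add hhi hlo).trans_eq (by ring))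

end SingularValueDecomposition

end Matrix

theorem gamma_two_sided_bound (m n k : ℕ) (hk : k < n) (hmn : n ≤ m)
    (A : Matrix (Fin m) (Fin n) ℝ)
    (U : Matrix (Fin m) (Fin m) ℝ) (hU : U.transpose * U = 1)
    (V : Matrix (Fin n) (Fin n) ℝ) (hV : V.transpose * V = 1)
    (σ : Fin n → ℝ) (hσpos : ∀ i, 0 < σ i) (hσanti : Antitone σ)
    (hA : A = U * (Matrix.of fun (i : Fin m) (j : Fin n) =>
      if (i : ℕ) = (j : ℕ) then σ j else 0) * V.transpose)
    (Q : Matrix (Fin n) (Fin k) ℝ) (hQ : Q.transpose * Q = 1)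
    (P : Matrix (Fin m) (Fin (k + 1)) ℝ)
    (B : Matrix (Fin (k + 1)) (Fin k) ℝ)
    (hAQ : A * Q = P * B)
    (Vkt : Matrix (Fin k) (Fin n) ℝ)
    (hVkt : Vkt = Matrix.of fun (i : Fin k) (j : Fin n) => V j (Fin.castLE (le_of_lt hk) i)) :
    σ ⟨k, hk⟩ ≤ specNorm (A - P * B * Q.transpose) ∧
      specNorm (A - P * B * Q.transpose) ≤
        σ ⟨k, hk⟩ + σ ⟨0, by omega⟩ * specNorm (Vkt * (1 - Q * Q.transpose)) := by
  rw [of_eq_finInclusion_mul_diagonal hmn] at hA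
  have hproj : ‖1 - Q * Qᵀ‖ ≤ 1 := by
    rw [← conjTranspose_eq_transpose_of_trivial] at hQ ⊢
    exact l2_opNorm_one_sub_mul_conjTranspose_le_one hQ
  have hres : A - P * B * Qᵀ = A * (1 - Q * Qᵀ) := by
    rw [Matrix.mul_sub, Matrix.mul_one, ← Matrix.mul_assoc, hAQ]
  have hupper := l2_opNorm_svd_mul_le hk hmn hU hV (fun i => (hσpos i).le) hσanti (1 - Q * Qᵀ)
  rw [← hA, ← hres] at hupper
  simp only [specNorm_eq_l2_opNorm, hVkt]
  refine ⟨hA ▸ singularValue_le_l2_opNorm_sub_mul_transpose hk hmn hU hV hσanti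
    (hσpos _).le _ _, hupper.trans (add_le_add ?_ le_rfl)⟩
  exact mul_le_of_le_one_right (hσpos _).le hproj
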